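/- Every extension of the merged default theory T contains either {x, p} or {¬x, p}, but no extension contains both x and ¬x. -/
import Mathlib


/-- Propositional formulas over variables indexed by `Nat`. -/
inductive Fm where
  | var : Nat → Fm
  | tru : Fm
  | fls : Fm
  | neg : Fm → Fm
  | conj : Fm → Fm → Fm
  | disj : Fm → Fm → Fm
deriving DecidableEq

/-- Evaluation of a formula under an assignment. -/
def Fm.eval (σ : Nat → Bool) : Fm → Bool
  | .var n => σ n
  | .tru => true
  | .fls => false
  | .neg F => !(F.eval σ)
  | .conj F G => F.eval σ && G.eval σ
  | .disj F G => F.eval σ || G.eval σ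

/-- `F.subst x v` replaces every occurrence of variable `x` by the constant `v`. -/
def Fm.subst (x : Nat) (v : Bool) : Fm → Fm
  | .var n => if n = x then (if v then .tru else .fls) else .var n
  | .tru => .tru
  | .fls => .fls
  | .neg F => .neg (F.subst x v)
  | .conj F G => .conj (F.subst x v) (G.subst x v)
  | .disj F G => .disj (F.subst x v) (G.subst x v)

/-- `F.occurs x` : variable `x` occurs in `F`. -/
def Fm.occurs (x : Nat) : Fm → Prop
  | .var n => n = x
  | .tru => False
  | .fls => False
  | .neg F => F.occurs x
  | .conj F G => F.occurs x ∨ G.occurs x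
  | .disj F G => F.occurs x ∨ G.occurs x

/-- Propositional entailment from a set of formulas. -/
def Entails (S : Set Fm) (f : Fm) : Prop :=
  ∀ σ : Nat → Bool, (∀ g ∈ S, g.eval σ = true) → f.eval σ = true

/-- Deductive closure. -/
def Th (S : Set Fm) : Set Fm := {f | Entails S f}

/-- A default `α : β / γ` with precondition `α`, justification `β`, consequence `γ`. -/
structure Default where
  pre : Fm
  jus : Fm
  con : Fm

/-- `G` is closed for the Reiter operator relative to candidate extension `E`:
it contains `W`, is deductively closed, and applies every default of `D` whose
precondition is in `G` and whose justification is consistent with `E`. -/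
def DLClosed (D : Set Default) (W : Set Fm) (E : Set Fm) (G : Set Fm) : Prop :=
  W ⊆ G ∧ (∀ f, Entails G f → f ∈ G) ∧
    ∀ d ∈ D, d.pre ∈ G → (Fm.neg d.jus) ∉ E → d.con ∈ G

/-- Reiter extension: `E` is the least set closed for the operator relative to `E` itself. -/
def IsExtension (D : Set Default) (W : Set Fm) (E : Set Fm) : Prop :=
  E = ⋂₀ {G | DLClosed D W E G}

/-- Skeptical entailment: `φ` belongs to every extension. -/
def Skeptical (D : Set Default) (W : Set Fm) (φ : Fm) : Prop :=
  ∀ E, IsExtension D W E → φ ∈ E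

/-- Substitution applied throughout a default. -/
def Default.subst (x : Nat) (v : Bool) (d : Default) : Default :=
  ⟨d.pre.subst x v, d.jus.subst x v, d.con.subst x v⟩

/-- `x` occurs in a default. -/
def Default.occurs (x : Nat) (d : Default) : Prop :=
  d.pre.occurs x ∨ d.jus.occurs x ∨ d.con.occurs x

/-- The merged default theory of the raising construction:
`{(: x∧p / x∧p), (: ¬x∧p / ¬x∧p)} ∪ {(p∧α : β / γ) | (α:β/γ) ∈ D}`. -/
def mergedD (D : Set Default) (x p : Nat) : Set Default :=
  {⟨.tru, .conj (.var x) (.var p), .conj (.var x) (.var p)⟩,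
   ⟨.tru, .conj (.neg (.var x)) (.var p), .conj (.neg (.var x)) (.var p)⟩} ∪
  (fun d => Default.mk (.conj (.var p) d.pre) d.jus d.con) '' D

/-- every extension of the merged theory contains either
`{x, p}` or `{¬x, p}`, and no extension contains both `x` and `¬x`. -/
theorem default_merged_extensions_contain (D : Set Default) (x p : Nat)
    (hxp : x ≠ p) (hp : ∀ d ∈ D, ¬ d.occurs p) (E : Set Fm)
    (hE : IsExtension (mergedD D x p) ∅ E) :
    ((Fm.var x ∈ E ∧ Fm.var p ∈ E) ∨ (Fm.neg (.var x) ∈ E ∧ Fm.var p ∈ E)) ∧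
      ¬ (Fm.var x ∈ E ∧ Fm.neg (.var x) ∈ E) := by
  classical
  -- E is itself DLClosed relative to E
  have hself : DLClosed (mergedD D x p) ∅ E E := by
    nth_rewrite 2 [hE]
    refine ⟨fun f hf => hf.elim, ?_, ?_⟩
    · intro f hf G hG
      exact hG.2.1 f (fun σ hσ => hf σ (fun g hg =>
        hσ g (Set.sInter_subset_of_mem hG hg)))
    · intro d hd hpre hjus G hG
      exact hG.2.2 d hd (hpre G hG) hjus
  obtain ⟨-, hded, happ⟩ := hself
  have htru : Fm.tru ∈ E := hded _ (fun σ _ => rfl)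
  have hd1mem : (⟨.tru, .conj (.var x) (.var p), .conj (.var x) (.var p)⟩ : Default)
      ∈ mergedD D x p := Or.inl (Or.inl rfl)
  have hd2mem : (⟨.tru, .conj (.neg (.var x)) (.var p), .conj (.neg (.var x)) (.var p)⟩ : Default)
      ∈ mergedD D x p := Or.inl (Or.inr rfl)
  -- conjunction elimination inside E
  have hconj : ∀ a b : Fm, Fm.conj a b ∈ E → a ∈ E ∧ b ∈ E := by
    intro a b hab
    constructor
    · refine hded a (fun σ hσ => ?_)
      have := hσ _ hab; simp [Fm.eval] at this; exact this.1
    · refine hded b (fun σ hσ => ?_)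
      have := hσ _ hab; simp [Fm.eval] at this; exact this.2
  -- if both justifications are blocked, Th ∅ is DLClosed, hence E ⊆ Th ∅
  have hTh : (Fm.neg (.conj (.var x) (.var p)) ∈ E) →
      (Fm.neg (.conj (.neg (.var x)) (.var p)) ∈ E) →
      E ⊆ Th ∅ := by
    intro h1 h2
    have hcl : DLClosed (mergedD D x p) ∅ E (Th ∅) := by
      refine ⟨fun f hf => hf.elim, ?_, ?_⟩
      · intro f hf σ hσ
        exact hf σ (fun g hg => hg σ hσ)
      · intro d hd hpre hjus
        rcases hd with (rfl | rfl) | ⟨d', _, rfl⟩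
        · exact absurd h1 hjus
        · exact absurd h2 hjus
        · exfalso
          have := hpre (fun _ => false) (fun g hg => hg.elim)
          simp [Fm.eval] at this
    nth_rewrite 1 [hE]
    exact Set.sInter_subset_of_mem hcl
  -- tautology facts
  have htaut1 : Fm.neg (.conj (.var x) (.var p)) ∉ Th ∅ := by
    intro h
    have := h (fun _ => true) (fun g hg => hg.elim)
    simp [Fm.eval] at this
  have htautx : Fm.neg (.var x) ∉ Th ∅ := by
    intro h
    have := h (fun _ => true) (fun g hg => hg.elim)
    simp [Fm.eval] at this
  constructor
  · by_cases h1 : Fm.neg (.conj (.var x) (.var p)) ∈ E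
    · by_cases h2 : Fm.neg (.conj (.neg (.var x)) (.var p)) ∈ E
      · exact absurd (hTh h1 h2 h1) htaut1
      · have := happ _ hd2mem htru h2
        obtain ⟨ha, hb⟩ := hconj _ _ this
        exact Or.inr ⟨ha, hb⟩
    · have := happ _ hd1mem htru h1
      obtain ⟨ha, hb⟩ := hconj _ _ this
      exact Or.inl ⟨ha, hb⟩
  · rintro ⟨hx, hnx⟩
    -- E is inconsistent, hence contains everything
    have hall : ∀ f : Fm, f ∈ E := by
      intro f
      refine hded f (fun σ hσ => ?_)
      have h1 := hσ _ hx
      have h2 := hσ _ hnx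
      simp [Fm.eval] at h1 h2
      rw [h1] at h2; exact absurd h2 (by simp)
    exact htautx (hTh (hall _) (hall _) hnx)
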